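/- (Borel's normal number theorem, representative of Borel's probabilistic work discussed in the entry) Lebesgue-almost every real number x in [0,1] is simply normal in base 2: the proportion of 1's among the first n binary digits of x converges to 1/2 as n → ∞. -/

import Mathlib

open MeasureTheory Filter Finset ProbabilityTheory
open scoped ENNReal

/-!
For `x ∈ [0, 1)` the first `n` binary digits of `x` are the bits of `⌊2ⁿ x⌋₊`, and `⌊2ⁿ x⌋₊` is
uniformly distributed on `{0, …, 2ⁿ - 1}`. Flipping a single bit is a bijection of that range,
so each digit is `1` with probability `1/2` and any two distinct digits are independent.
The indicators of the digits are thus pairwise independent and identically distributed, and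
Etemadi's strong law of large numbers, which only needs pairwise independence, shows that their
averages tend to `1/2` almost surely.
-/

lemma two_mul_card_filter_testBit_and {n a : ℕ} (ha : a < n) (q : ℕ → Prop) [DecidablePred q]
    (hq : ∀ k, q (k ^^^ 2 ^ a) ↔ q k) :
    2 * #{k ∈ range (2 ^ n) | k.testBit a ∧ q k} = #{k ∈ range (2 ^ n) | q k} := by
  have hlt : 2 ^ a < 2 ^ n := Nat.pow_lt_pow_right one_lt_two ha
  have hflip : #{k ∈ range (2 ^ n) | ¬k.testBit a ∧ q k} =
      #{k ∈ range (2 ^ n) | k.testBit a ∧ q k} := by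
    have hinv (k : ℕ) : k ^^^ 2 ^ a ^^^ 2 ^ a = k := by
      rw [Nat.xor_assoc, Nat.xor_self, Nat.xor_zero]
    refine card_nbij' (· ^^^ 2 ^ a) (· ^^^ 2 ^ a) ?_ ?_ (fun k _ => hinv k) (fun k _ => hinv k) <;>
      intro k <;> simp +contextual [Nat.xor_lt_two_pow, hlt, hq, Nat.testBit_two_pow_self]
  have hsplit := card_filter_add_card_filter_not (s := {k ∈ range (2 ^ n) | q k})
    (fun k => k.testBit a)
  simp only [filter_filter, and_comm (a := q _)] at hsplit
  omega

lemma two_mul_card_filter_testBit {n a : ℕ} (ha : a < n) :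
    2 * #{k ∈ range (2 ^ n) | k.testBit a} = 2 ^ n := by
  simpa using two_mul_card_filter_testBit_and ha (fun _ => True) (fun _ => Iff.rfl)

lemma four_mul_card_filter_testBit_and_testBit {n a b : ℕ} (ha : a < n) (hb : b < n)
    (hab : a ≠ b) :
    4 * #{k ∈ range (2 ^ n) | k.testBit a ∧ k.testBit b} = 2 ^ n := by
  have := two_mul_card_filter_testBit_and ha (fun k => k.testBit b)
    (fun k => by simp [Nat.testBit_two_pow_of_ne hab])
  have := two_mul_card_filter_testBit hb
  omega

lemma setOf_floor_mem_Ico_eq_biUnion {N : ℕ} (p : ℕ → Prop) [DecidablePred p] :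
    {y : ℝ | y ∈ Set.Ico 0 (N : ℝ) ∧ p ⌊y⌋₊} =
      ⋃ k ∈ {k ∈ range N | p k}, Set.Ico (k : ℝ) (k + 1) := by
  ext y
  simp only [Set.mem_ofPred_eq, Set.mem_Ico, Set.mem_iUnion, mem_filter, mem_range, exists_prop]
  constructor
  · rintro ⟨⟨hy0, hyN⟩, hp⟩
    exact ⟨⌊y⌋₊, ⟨(Nat.floor_lt hy0).2 hyN, hp⟩, Nat.floor_le hy0, Nat.lt_floor_add_one y⟩
  · rintro ⟨k, ⟨hkN, hp⟩, hky, hyk⟩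
    have hy0 : 0 ≤ y := le_trans k.cast_nonneg hky
    have hfloor : ⌊y⌋₊ = k := (Nat.floor_eq_iff hy0).2 ⟨hky, hyk⟩
    refine ⟨⟨hy0, ?_⟩, hfloor ▸ hp⟩
    calc y < k + 1 := hyk
      _ ≤ N := by exact_mod_cast hkN

lemma volume_restrict_Ico_setOf_floor_mul {N : ℕ} (hN : N ≠ 0) (p : ℕ → Prop) [DecidablePred p] :
    volume.restrict (Set.Ico 0 1) {x : ℝ | p ⌊x * N⌋₊} = #{k ∈ range N | p k} / N := by
  have hNR : (N : ℝ) ≠ 0 := Nat.cast_ne_zero.2 hN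
  have hpre : {x : ℝ | p ⌊x * N⌋₊} ∩ Set.Ico 0 1 =
      (· * (N : ℝ)) ⁻¹' {y : ℝ | y ∈ Set.Ico 0 (N : ℝ) ∧ p ⌊y⌋₊} := by
    ext x
    simp only [Set.mem_inter_iff, Set.mem_ofPred_eq, Set.mem_preimage, Set.mem_Ico]
    have hNpos : (0 : ℝ) < N := by positivity
    constructor
    · rintro ⟨hp, hx0, hx1⟩
      exact ⟨⟨by positivity, by nlinarith⟩, hp⟩
    · rintro ⟨⟨hx0, hx1⟩, hp⟩
      exact ⟨hp, nonneg_of_mul_nonneg_left hx0 hNpos, by nlinarith⟩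
  rw [Measure.restrict_apply' measurableSet_Ico, hpre, Real.volume_preimage_mul_right hNR,
    setOf_floor_mem_Ico_eq_biUnion, measure_biUnion_finset]
  · simp only [Real.volume_Ico, add_sub_cancel_left, ENNReal.ofReal_one, sum_const, nsmul_eq_mul,
      mul_one]
    rw [abs_inv, Nat.abs_cast, ENNReal.ofReal_inv_of_pos (by positivity), ENNReal.ofReal_natCast,
      ENNReal.div_eq_inv_mul]
  · intro k _ l _ hkl
    simpa using Set.pairwise_disjoint_Ico_intCast ℝ (Int.natCast_inj.not.2 hkl)
  · exact fun _ _ => measurableSet_Ico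

lemma volume_restrict_Ico_setOf_floor_mul_eq_inv {N m : ℕ} (hN : N ≠ 0) (p : ℕ → Prop)
    [DecidablePred p] (hcard : m * #{k ∈ range N | p k} = N) :
    volume.restrict (Set.Ico 0 1) {x : ℝ | p ⌊x * N⌋₊} = (m : ℝ≥0∞)⁻¹ := by
  rw [volume_restrict_Ico_setOf_floor_mul hN]
  generalize #{k ∈ range N | p k} = c at hcard ⊢
  subst hcard
  rw [Nat.cast_mul, ENNReal.div_eq_inv_mul,
    ENNReal.mul_inv (Or.inr (ENNReal.natCast_ne_top _)) (Or.inl (ENNReal.natCast_ne_top _)),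
    mul_assoc, ENNReal.inv_mul_cancel (Nat.cast_ne_zero.2 (right_ne_zero_of_mul hN))
      (ENNReal.natCast_ne_top _), mul_one]

lemma ProbabilityTheory.IndepSet.indepFun_indicator_const {Ω β : Type*} [MeasurableSpace Ω]
    [MeasurableSpace β] [Zero β] {μ : Measure Ω} {s t : Set Ω} (h : IndepSet s t μ) (c d : β) :
    IndepFun (s.indicator fun _ => c) (t.indicator fun _ => d) μ :=
  (IndepFun_iff_Indep _ _ _).2 <| indep_of_indep_of_le ((IndepSet_iff_Indep s t μ).1 h)
    (MeasurableSpace.comap_indicator_const_le_generateFrom_singleton s c)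
    (MeasurableSpace.comap_indicator_const_le_generateFrom_singleton t d)

lemma identDistrib_indicator_const {Ω β : Type*} [MeasurableSpace Ω] [MeasurableSpace β] [Zero β]
    {μ : Measure Ω} [IsFiniteMeasure μ] {s t : Set Ω} (hs : MeasurableSet s)
    (ht : MeasurableSet t) (hst : μ s = μ t) (c : β) :
    IdentDistrib (s.indicator fun _ => c) (t.indicator fun _ => c) μ μ where
  aemeasurable_fst := (measurable_const.indicator hs).aemeasurable
  aemeasurable_snd := (measurable_const.indicator ht).aemeasurable
  map_eq := by
    classical
    ext u hu
    rw [Measure.map_apply (measurable_const.indicator hs) hu,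
      Measure.map_apply (measurable_const.indicator ht) hu,
      Set.indicator_const_preimage_eq_union, Set.indicator_const_preimage_eq_union]
    split_ifs <;> simp [hst, measure_compl hs, measure_compl ht]

-- `i = 0` is the first digit after the binary point.
def binaryDigitOneSet (i : ℕ) : Set ℝ := {x | ⌊x * 2 ^ (i + 1)⌋ % 2 = 1}

lemma measurableSet_binaryDigitOneSet (i : ℕ) : MeasurableSet (binaryDigitOneSet i) :=
  ((measurable_from_top (f := fun k : ℤ => k % 2)).comp
    (Int.measurable_floor.comp (measurable_id.mul_const _))) (measurableSet_singleton 1)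

lemma mem_binaryDigitOneSet_iff_testBit {x : ℝ} (hx : 0 ≤ x) {i n : ℕ} (hin : i < n) :
    x ∈ binaryDigitOneSet i ↔ ⌊x * 2 ^ n⌋₊.testBit (n - 1 - i) := by
  have hfloor : ⌊x * 2 ^ (i + 1)⌋₊ = ⌊x * 2 ^ n⌋₊ / 2 ^ (n - 1 - i) := by
    rw [← Nat.floor_div_natCast, Nat.cast_pow, Nat.cast_ofNat, mul_div_assoc, div_eq_mul_inv,
      ← pow_sub₀ (2 : ℝ) two_ne_zero (by omega : n - 1 - i ≤ n)]
    congr 3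
    omega
  rw [binaryDigitOneSet, Set.mem_ofPred_eq, ← Int.natCast_floor_eq_floor (by positivity),
    Nat.testBit_eq_decide_div_mod_eq, ← hfloor, decide_eq_true_iff]
  omega

lemma binaryDigitOneSet_ae_eq_setOf_testBit (i : ℕ) {n : ℕ} (hin : i < n) :
    binaryDigitOneSet i =ᵐ[volume.restrict (Set.Ico 0 1)]
      {x : ℝ | ⌊x * 2 ^ n⌋₊.testBit (n - 1 - i)} := by
  filter_upwards [ae_restrict_mem measurableSet_Ico] with x hx
  exact propext (mem_binaryDigitOneSet_iff_testBit hx.1 hin)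

lemma volume_restrict_Ico_binaryDigitOneSet (i : ℕ) :
    volume.restrict (Set.Ico 0 1) (binaryDigitOneSet i) = 2⁻¹ := by
  have hcard := two_mul_card_filter_testBit (n := i + 1) (a := 0) (by omega)
  rw [measure_congr (binaryDigitOneSet_ae_eq_setOf_testBit i (by omega : i < i + 1)),
    Nat.add_sub_cancel, Nat.sub_self]
  exact_mod_cast volume_restrict_Ico_setOf_floor_mul_eq_inv (by positivity) _ hcard

lemma volume_restrict_Ico_binaryDigitOneSet_inter {i j : ℕ} (hij : i < j) :
    volume.restrict (Set.Ico 0 1) (binaryDigitOneSet i ∩ binaryDigitOneSet j) = 4⁻¹ := by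
  have hcard := four_mul_card_filter_testBit_and_testBit (n := j + 1) (a := j - i) (b := 0)
    (by omega) (by omega) (by omega)
  rw [measure_congr ((binaryDigitOneSet_ae_eq_setOf_testBit i (by omega : i < j + 1)).inter
    (binaryDigitOneSet_ae_eq_setOf_testBit j (by omega : j < j + 1))), Nat.add_sub_cancel,
    Nat.sub_self, ← Set.ofPred_and]
  exact_mod_cast volume_restrict_Ico_setOf_floor_mul_eq_inv (by positivity)
    (fun k => k.testBit (j - i) ∧ k.testBit 0) hcard

instance : IsProbabilityMeasure (volume.restrict (Set.Ico (0 : ℝ) 1)) := ⟨by simp⟩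

lemma indepSet_binaryDigitOneSet {i j : ℕ} (hij : i ≠ j) :
    IndepSet (binaryDigitOneSet i) (binaryDigitOneSet j) (volume.restrict (Set.Ico 0 1)) := by
  rw [indepSet_iff_measure_inter_eq_mul (measurableSet_binaryDigitOneSet i)
    (measurableSet_binaryDigitOneSet j) _, volume_restrict_Ico_binaryDigitOneSet,
    volume_restrict_Ico_binaryDigitOneSet, ← ENNReal.mul_inv (by simp) (by simp)]
  rcases hij.lt_or_gt with hlt | hgt
  · rw [volume_restrict_Ico_binaryDigitOneSet_inter hlt]
    norm_num
  · rw [Set.inter_comm, volume_restrict_Ico_binaryDigitOneSet_inter hgt]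
    norm_num

theorem borel_simply_normal_base_two :
    ∀ᵐ x ∂(volume.restrict (Set.Icc (0 : ℝ) 1)),
      Tendsto (fun n : ℕ =>
          (((Finset.range n).filter (fun i => ⌊x * 2 ^ (i + 1)⌋ % 2 = 1)).card : ℝ) / n)
        atTop (nhds (1 / 2)) := by
  rw [← Measure.restrict_congr_set Ico_ae_eq_Icc]
  set μ := volume.restrict (Set.Ico (0 : ℝ) 1)
  set X : ℕ → ℝ → ℝ := fun i => (binaryDigitOneSet i).indicator fun _ => 1
  have hindep : Pairwise fun i j => X i ⟂ᵢ[μ] X j := fun i j hij =>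
    (indepSet_binaryDigitOneSet hij).indepFun_indicator_const 1 1
  have hident (i : ℕ) : IdentDistrib (X i) (X 0) μ μ :=
    identDistrib_indicator_const (measurableSet_binaryDigitOneSet i)
      (measurableSet_binaryDigitOneSet 0)
      (by simp only [μ, volume_restrict_Ico_binaryDigitOneSet]) 1
  have hmean : μ[X 0] = 1 / 2 := by
    rw [integral_indicator_const _ (measurableSet_binaryDigitOneSet 0), measureReal_def,
      volume_restrict_Ico_binaryDigitOneSet]
    norm_num
  have hint : Integrable (X 0) μ :=
    (integrable_const 1).indicator (measurableSet_binaryDigitOneSet 0)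
  filter_upwards [strong_law_ae_real X hint hindep hident] with x hx
  rw [hmean] at hx
  refine hx.congr fun n => ?_
  simp only [X, Set.indicator_apply, binaryDigitOneSet, Set.mem_ofPred_eq, sum_boole]
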